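/- Assume lim_{N→∞} d_U(A_N, A) = 0. Then for every function f : ℝ^r → ℝ of class C³ and every T > 0, sup_{N ≥ 1} sup_{0 ≤ t ≤ T} sup_{p ∈ K_N} | N·(U_{N,[Nt]} f(p) − f(p)) | < ∞. -/

import Mathlib

open scoped BigOperators NNReal
open Finset MeasureTheory

noncomputable section

/-- A Q-matrix: nonnegative off-diagonal entries, rows summing to zero. -/
def IsQMatrix {r : ℕ} (M : Matrix (Fin r) (Fin r) ℝ) : Prop :=
  (∀ i j, i ≠ j → 0 ≤ M i j) ∧ ∀ i, ∑ j, M i j = 0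

/-- A stochastic matrix: nonnegative entries, rows summing to one. -/
def IsStochastic {r : ℕ} (M : Matrix (Fin r) (Fin r) ℝ) : Prop :=
  (∀ i j, 0 ≤ M i j) ∧ ∀ i, ∑ j, M i j = 1

/-- Frobenius norm of an `r×r` real matrix. -/
def frobNorm {r : ℕ} (M : Matrix (Fin r) (Fin r) ℝ) : ℝ :=
  Real.sqrt (∑ i, ∑ j, (M i j) ^ 2)

/-- The metric `d_U(x,y) = ∫₀^∞ e^{-u} sup_{0≤t≤u} (‖x(t)−y(t)‖ ∧ 1) du` on
matrix-valued paths. -/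
def dU {r : ℕ} (x y : ℝ → Matrix (Fin r) (Fin r) ℝ) : ℝ :=
  ∫ u in Set.Ioi (0 : ℝ),
    Real.exp (-u) * sSup ((fun t => min (frobNorm (x t - y t)) 1) '' Set.Icc 0 u)

/-- Multinomial probability weight `(∑β)!/∏ β_j! · ∏ p_j^{β_j}`. -/
def multinomialWeight {r : ℕ} (p : Fin r → ℝ) (β : Fin r → ℕ) : ℝ :=
  (Nat.multinomial Finset.univ β : ℝ) * ∏ j, p j ^ β j

/-- The internal-dynamics transition operator: `SOp N P f n = S_{N} f(n/N)`, where each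
of the `n i` agents of type `i` independently moves to type `j` with probability `P i j`,
the sum running over all arrays `ξ ∈ ℤ₊^{r×r}` whose `i`-th row sums to `n i`. -/
def SOp {r : ℕ} (N : ℕ) (P : Matrix (Fin r) (Fin r) ℝ) (f : (Fin r → ℝ) → ℝ)
    (n : Fin r → ℕ) : ℝ :=
  ∑ ξ ∈ Fintype.piFinset fun i => Finset.Nat.antidiagonalTuple r (n i),
    (∏ i, multinomialWeight (P i) (ξ i)) * f fun j => ((∑ i, ξ i j : ℕ) : ℝ) / N

/-- The multinomial-sampling operator `T_N f(p) = E[f(M/N)]`, `M ~ multinomial(N,p)`. -/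
def TOp {r : ℕ} (N : ℕ) (f : (Fin r → ℝ) → ℝ) (p : Fin r → ℝ) : ℝ :=
  ∑ α ∈ Finset.Nat.antidiagonalTuple r N,
    multinomialWeight p α * f fun i => (α i : ℝ) / N

/-- One-step operator of internal dynamics followed by multinomial sampling:
`U_{N,k} f = S_{N,k}(T_N f)`. -/
def UOp {r : ℕ} (N : ℕ) (P : Matrix (Fin r) (Fin r) ℝ) (f : (Fin r → ℝ) → ℝ)
    (n : Fin r → ℕ) : ℝ :=
  SOp N P (TOp N f) n

/-- The first-order generator `G_A(t) f(p) = ∑_{i,j} pᵢ aᵢⱼ(t) ∂f/∂xⱼ(p)`,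
here taking the matrix `A(t)` as argument. -/
def GA {r : ℕ} (M : Matrix (Fin r) (Fin r) ℝ) (f : (Fin r → ℝ) → ℝ) (p : Fin r → ℝ) : ℝ :=
  ∑ i, ∑ j, p i * M i j * fderiv ℝ f p (Pi.single j 1)

/-- The Wright–Fisher generator
`G_B f(p) = (1/2) ∑_{i,j} pᵢ(δᵢⱼ − pⱼ) ∂²f/∂xᵢ∂xⱼ(p)`. -/
def GB {r : ℕ} (f : (Fin r → ℝ) → ℝ) (p : Fin r → ℝ) : ℝ :=
  (1 / 2) * ∑ i, ∑ j,
    p i * ((if i = j then (1 : ℝ) else 0) - p j) *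
      fderiv ℝ (fun x => fderiv ℝ f x (Pi.single j 1)) p (Pi.single i 1)


/-!
Write `U = S ∘ T` and split `N (U f - f) = N · S (T f - f) + N (S f - f)`. Both steps average
`f` over random points of the simplex, and a second-order Taylor expansion around the current
state bounds such an average by the first moment times `‖Df‖` plus the second moment times
`‖D²f‖`. Multinomial sampling is unbiased with second moment `≤ 1/N`, so `|T f - f| ≤ ‖D²f‖ / N`,
and `S` is an average. Under the internal dynamics with `P = I + A/N` the mean displacement is
`≤ ‖A‖ / N` and, by Cauchy–Schwarz over the `r` rows, the second moment is
`≤ r (N + r² ‖A‖²) / N²`; so `N (S f - f)` is bounded in terms of `‖A‖` alone.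

It remains to bound the entries of `A_N(⌊Nt⌋/N)` uniformly in `N` and `t ≤ T`. Since
`d_U(x, y) ≥ e^{-t} (‖x(t) - y(t)‖ ∧ 1)`, convergence in `d_U` gives `‖A_N(s) - A(s)‖ < 1` on
`[0, T]` for large `N`, and the càdlàg path `A` is bounded on the compact `[0, T]`. For the finitely
many remaining `N` only finitely many grid points `k/N ≤ T` occur.
-/

open Function
open scoped Nat

section Multinomial

variable {ι : Type*} [Fintype ι] [DecidableEq ι]

lemma sum_update_succ (β : ι → ℕ) (j : ι) :
    ∑ i, update β j (β j + 1) i = ∑ i, β i + 1 := by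
  rw [sum_update_of_mem (mem_univ j), sdiff_singleton_eq_erase, ← add_sum_erase _ _ (mem_univ j)]
  ring

lemma succ_mul_multinomial_update (β : ι → ℕ) (j : ι) :
    (β j + 1) * Nat.multinomial univ (update β j (β j + 1))
      = (∑ i, β i + 1) * Nat.multinomial univ β := by
  have hfact : ∏ i, (update β j (β j + 1) i)! = (β j + 1) * ∏ i, (β i)! := by
    rw [← mul_prod_erase _ _ (mem_univ j), ← mul_prod_erase _ (fun i => (β i)!) (mem_univ j),
      update_self, Nat.factorial_succ, mul_assoc]
    congr 2
    exact prod_congr rfl fun i hi => by rw [update_of_ne (ne_of_mem_erase hi)]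
  refine Nat.eq_of_mul_eq_mul_left (prod_pos fun i (_ : i ∈ univ) => Nat.factorial_pos (β i)) ?_
  calc (∏ i, (β i)!) * ((β j + 1) * Nat.multinomial univ (update β j (β j + 1)))
      = (∏ i, (update β j (β j + 1) i)!) * Nat.multinomial univ (update β j (β j + 1)) := by
        rw [hfact]; ring
    _ = (∑ i, β i + 1) * (∑ i, β i)! := by
        rw [Nat.multinomial_spec, sum_update_succ, Nat.factorial_succ]
    _ = (∏ i, (β i)!) * ((∑ i, β i + 1) * Nat.multinomial univ β) := by
        rw [← Nat.multinomial_spec]; ring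

end Multinomial

section MultinomialWeight

variable {r : ℕ}

lemma multinomialWeight_nonneg {p : Fin r → ℝ} (hp : ∀ j, 0 ≤ p j) (β : Fin r → ℕ) :
    0 ≤ multinomialWeight p β :=
  mul_nonneg (Nat.cast_nonneg _) (prod_nonneg fun j _ => pow_nonneg (hp j) _)

lemma sum_multinomialWeight (p : Fin r → ℝ) (n : ℕ) :
    ∑ α ∈ Nat.antidiagonalTuple r n, multinomialWeight p α = (∑ j, p j) ^ n := by
  rw [← piAntidiag_univ_fin_eq_antidiagonalTuple, sum_pow_eq_sum_piAntidiag]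
  rfl

lemma succ_mul_multinomialWeight_update (p : Fin r → ℝ) (β : Fin r → ℕ) (j : Fin r) :
    (β j + 1 : ℝ) * multinomialWeight p (update β j (β j + 1))
      = (∑ i, β i + 1 : ℕ) * p j * multinomialWeight p β := by
  have hpow : ∏ i, p i ^ update β j (β j + 1) i = p j * ∏ i, p i ^ β i := by
    rw [← mul_prod_erase _ _ (mem_univ j), ← mul_prod_erase _ (fun i => p i ^ β i) (mem_univ j),
      update_self, pow_succ, prod_congr rfl fun i hi => by rw [update_of_ne (ne_of_mem_erase hi)]]
    ring
  have hmult := congrArg (Nat.cast (R := ℝ)) (succ_mul_multinomial_update β j)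
  push_cast at hmult
  simp only [multinomialWeight, hpow]
  push_cast
  linear_combination (p j * ∏ i, p i ^ β i) * hmult

end MultinomialWeight

section MultinomialMoments

variable {r : ℕ}

lemma sum_apply_mul_multinomialWeight_mul (p : Fin r → ℝ) (j : Fin r) (m : ℕ)
    (G : (Fin r → ℕ) → ℝ) :
    ∑ α ∈ Nat.antidiagonalTuple r (m + 1), (α j : ℝ) * multinomialWeight p α * G α
      = (m + 1) * p j * ∑ β ∈ Nat.antidiagonalTuple r m,
          multinomialWeight p β * G (update β j (β j + 1)) := by
  set bump : (Fin r → ℕ) → Fin r → ℕ := fun β => update β j (β j + 1)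
  have hbump : ∀ β ∈ Nat.antidiagonalTuple r m, bump β ∈ Nat.antidiagonalTuple r (m + 1) := by
    intro β hβ
    rw [Nat.mem_antidiagonalTuple] at hβ ⊢
    rw [sum_update_succ, hβ]
  have hbump_inj : Set.InjOn bump (Nat.antidiagonalTuple r m) := by
    intro β₁ _ β₂ _ h
    funext i
    have hi := congrFun h i
    rcases eq_or_ne i j with rfl | hij
    · simpa [bump] using hi
    · simpa [bump, hij] using hi
  have hzero : ∀ α ∈ Nat.antidiagonalTuple r (m + 1), α ∉ (Nat.antidiagonalTuple r m).image bump →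
      (α j : ℝ) * multinomialWeight p α * G α = 0 := by
    intro α hα hnot
    suffices α j = 0 by simp [this]
    by_contra hj
    refine hnot (mem_image.2 ⟨update α j (α j - 1), ?_, ?_⟩)
    · rw [Nat.mem_antidiagonalTuple] at hα ⊢
      have := sum_update_succ (update α j (α j - 1)) j
      rw [update_self, Nat.sub_add_cancel (Nat.one_le_iff_ne_zero.2 hj), update_idem,
        update_eq_self, hα] at this
      omega
    · simp only [bump, update_self, Nat.sub_add_cancel (Nat.one_le_iff_ne_zero.2 hj), update_idem,
        update_eq_self]
  rw [← sum_subset (image_subset_iff.2 hbump) hzero, sum_image hbump_inj, mul_sum]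
  refine sum_congr rfl fun β hβ => ?_
  have h := succ_mul_multinomialWeight_update p β j
  rw [Nat.mem_antidiagonalTuple.1 hβ] at h
  simp only [bump, update_self]
  push_cast at h ⊢
  rw [h]
  ring

lemma sum_multinomialWeight_mul_apply (p : Fin r → ℝ) (n : ℕ) (j : Fin r) :
    ∑ α ∈ Nat.antidiagonalTuple r n, multinomialWeight p α * α j
      = n * p j * (∑ i, p i) ^ (n - 1) := by
  cases n with
  | zero => simp [Nat.antidiagonalTuple_zero_right]
  | succ m =>
    have h := sum_apply_mul_multinomialWeight_mul p j m fun _ => 1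
    simp only [mul_one] at h
    simp only [mul_comm (multinomialWeight p _)]
    rw [h, sum_multinomialWeight]
    push_cast
    ring_nf

lemma sum_multinomialWeight_mul_descFactorial_two (p : Fin r → ℝ) (n : ℕ) (j : Fin r) :
    ∑ α ∈ Nat.antidiagonalTuple r n, multinomialWeight p α * (α j * (α j - 1))
      = n * (n - 1) * p j ^ 2 * (∑ i, p i) ^ (n - 2) := by
  cases n with
  | zero => simp [Nat.antidiagonalTuple_zero_right]
  | succ m =>
    have h := sum_apply_mul_multinomialWeight_mul p j m fun α => (α j : ℝ) - 1
    simp only [update_self, Nat.cast_add, Nat.cast_one, add_sub_cancel_right] at h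
    rw [sum_congr rfl fun α _ => by rw [mul_comm, mul_right_comm], h,
      sum_multinomialWeight_mul_apply, show m + 1 - 2 = m - 1 by omega]
    push_cast
    ring

lemma sum_multinomialWeight_mul_sub_sq {p : Fin r → ℝ} (hp : ∑ i, p i = 1) (n : ℕ) (j : Fin r)
    (c : ℝ) :
    ∑ α ∈ Nat.antidiagonalTuple r n, multinomialWeight p α * (α j - c) ^ 2
      = n * p j * (1 - p j) + (n * p j - c) ^ 2 := by
  have h0 := sum_multinomialWeight p n
  have h1 := sum_multinomialWeight_mul_apply p n j
  have h2 := sum_multinomialWeight_mul_descFactorial_two p n j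
  rw [hp, one_pow] at h0 h1 h2
  have expand : ∀ α : Fin r → ℕ, multinomialWeight p α * (α j - c) ^ 2
      = multinomialWeight p α * (α j * (α j - 1)) + (1 - 2 * c) * (multinomialWeight p α * α j)
        + c ^ 2 * multinomialWeight p α := fun α => by ring
  rw [sum_congr rfl fun α _ => expand α, sum_add_distrib, sum_add_distrib, ← mul_sum, ← mul_sum,
    h0, h1, h2]
  ring

end MultinomialMoments

section ProductWeights

variable {ι κ R : Type*} [Fintype ι] [DecidableEq ι] [CommSemiring R]
  {s : ι → Finset κ} {w : ι → κ → R}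

lemma sum_piFinset_prod_eq_one (hw : ∀ i, ∑ x ∈ s i, w i x = 1) :
    ∑ ξ ∈ Fintype.piFinset s, ∏ i, w i (ξ i) = 1 := by
  rw [← prod_univ_sum, prod_eq_one fun i _ => hw i]

lemma sum_piFinset_prod_mul_apply (hw : ∀ i, ∑ x ∈ s i, w i x = 1) (i : ι) (h : κ → R) :
    ∑ ξ ∈ Fintype.piFinset s, (∏ l, w l (ξ l)) * h (ξ i) = ∑ x ∈ s i, w i x * h x := by
  have hsplit : ∀ ξ : ι → κ,
      (∏ l, w l (ξ l)) * h (ξ i) = ∏ l, w l (ξ l) * if l = i then h (ξ l) else 1 := by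
    intro ξ
    rw [prod_mul_distrib, prod_ite_eq' univ i fun l => h (ξ l), if_pos (mem_univ i)]
  rw [sum_congr rfl fun ξ _ => hsplit ξ,
    ← prod_univ_sum s fun l x => w l x * if l = i then h x else 1,
    ← mul_prod_erase _ _ (mem_univ i), prod_eq_one fun l hl => ?_]
  · simp
  · simp [ne_of_mem_erase hl, hw l]

end ProductWeights

section Taylor

variable {E : Type*} [NormedAddCommGroup E] [NormedSpace ℝ E] {K : Set E} {f : E → ℝ} {M : ℝ}

theorem Convex.abs_image_sub_sub_fderiv_le (hK : Convex ℝ K)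
    (hf : ∀ z ∈ K, DifferentiableAt ℝ f z) (hf' : ∀ z ∈ K, DifferentiableAt ℝ (fderiv ℝ f) z)
    (hM : ∀ z ∈ K, ‖fderiv ℝ (fderiv ℝ f) z‖ ≤ M) {x y : E} (hx : x ∈ K) (hy : y ∈ K) :
    |f y - f x - fderiv ℝ f x (y - x)| ≤ M * ‖y - x‖ ^ 2 := by
  set L := fderiv ℝ f x
  have hseg : segment ℝ x y ⊆ K := hK.segment_subset hx hy
  have hM0 : 0 ≤ M := (norm_nonneg (fderiv ℝ (fderiv ℝ f) x)).trans (hM x hx)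
  have hderiv : ∀ z ∈ segment ℝ x y, HasFDerivAt (fun z => f z - L z) (fderiv ℝ f z - L) z :=
    fun z hz => (hf z (hseg hz)).hasFDerivAt.sub L.hasFDerivAt
  have hbound : ∀ z ∈ segment ℝ x y, ‖fderiv ℝ f z - L‖ ≤ M * ‖y - x‖ := fun z hz =>
    calc ‖fderiv ℝ f z - L‖ ≤ M * ‖z - x‖ :=
          hK.norm_image_sub_le_of_norm_fderiv_le hf' hM hx (hseg hz)
      _ ≤ M * ‖y - x‖ := mul_le_mul_of_nonneg_left (norm_sub_le_of_mem_segment hz) hM0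
  have := (convex_segment x y).norm_image_sub_le_of_norm_hasFDerivWithin_le
    (fun z hz => (hderiv z hz).hasFDerivWithinAt) hbound (left_mem_segment ℝ x y)
    (right_mem_segment ℝ x y)
  rw [← Real.norm_eq_abs, map_sub]
  calc ‖f y - f x - (L y - L x)‖ = ‖f y - L y - (f x - L x)‖ := by ring_nf
    _ ≤ M * ‖y - x‖ * ‖y - x‖ := this
    _ = M * ‖y - x‖ ^ 2 := by ring

theorem Convex.abs_sum_mul_image_sub_le (hK : Convex ℝ K)
    (hf : ∀ z ∈ K, DifferentiableAt ℝ f z) (hf' : ∀ z ∈ K, DifferentiableAt ℝ (fderiv ℝ f) z)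
    (hM : ∀ z ∈ K, ‖fderiv ℝ (fderiv ℝ f) z‖ ≤ M) {ι : Type*} {s : Finset ι} {w : ι → ℝ}
    (hw0 : ∀ i ∈ s, 0 ≤ w i) (hw1 : ∑ i ∈ s, w i = 1) {y : ι → E} (hy : ∀ i ∈ s, y i ∈ K)
    {x : E} (hx : x ∈ K) :
    |∑ i ∈ s, w i * f (y i) - f x|
      ≤ ‖fderiv ℝ f x‖ * ‖∑ i ∈ s, w i • (y i - x)‖ + M * ∑ i ∈ s, w i * ‖y i - x‖ ^ 2 := by
  set L := fderiv ℝ f x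
  have hsplit : ∑ i ∈ s, w i * f (y i) - f x
      = ∑ i ∈ s, w i * (f (y i) - f x - L (y i - x)) + L (∑ i ∈ s, w i • (y i - x)) := by
    simp only [map_sum, map_smul, smul_eq_mul, mul_sub, sum_sub_distrib, ← sum_mul, hw1]
    ring
  have hrem : |∑ i ∈ s, w i * (f (y i) - f x - L (y i - x))|
      ≤ M * ∑ i ∈ s, w i * ‖y i - x‖ ^ 2 := by
    rw [mul_sum]
    refine (abs_sum_le_sum_abs _ _).trans (sum_le_sum fun i hi => ?_)
    rw [abs_mul, abs_of_nonneg (hw0 i hi), mul_left_comm]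
    exact mul_le_mul_of_nonneg_left
      (hK.abs_image_sub_sub_fderiv_le hf hf' hM hx (hy i hi)) (hw0 i hi)
  rw [hsplit, add_comm]
  refine (abs_add_le _ _).trans (add_le_add ?_ hrem)
  rw [← Real.norm_eq_abs]
  exact L.le_opNorm _

end Taylor

section Sampling

variable {r : ℕ} {f : (Fin r → ℝ) → ℝ} {M : ℝ}

lemma sq_norm_le_sum_sq (v : Fin r → ℝ) : ‖v‖ ^ 2 ≤ ∑ j, v j ^ 2 := by
  have h : ‖v‖ ≤ √(∑ j, v j ^ 2) := by
    refine (pi_norm_le_iff_of_nonneg (Real.sqrt_nonneg _)).2 fun i => ?_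
    rw [Real.norm_eq_abs, ← Real.sqrt_sq_eq_abs]
    exact Real.sqrt_le_sqrt (single_le_sum (fun j _ => sq_nonneg (v j)) (mem_univ i))
  calc ‖v‖ ^ 2 ≤ √(∑ j, v j ^ 2) ^ 2 := pow_le_pow_left₀ (norm_nonneg v) h 2
    _ = ∑ j, v j ^ 2 := Real.sq_sqrt (sum_nonneg fun j _ => sq_nonneg (v j))

lemma natCast_div_mem_stdSimplex {N : ℕ} (hN : N ≠ 0) {α : Fin r → ℕ} (hα : ∑ i, α i = N) :
    (fun i => (α i : ℝ) / N) ∈ stdSimplex ℝ (Fin r) := by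
  refine ⟨fun i => by positivity, ?_⟩
  rw [← sum_div, ← Nat.cast_sum, hα, div_self (Nat.cast_ne_zero.2 hN)]

lemma sum_multinomialWeight_smul_sub_eq_zero {N : ℕ} (hN : N ≠ 0) {q : Fin r → ℝ}
    (hq : q ∈ stdSimplex ℝ (Fin r)) :
    ∑ α ∈ Nat.antidiagonalTuple r N,
      multinomialWeight q α • ((fun i => (α i : ℝ) / N) - q) = 0 := by
  funext j
  have h0 := sum_multinomialWeight q N
  have h1 := sum_multinomialWeight_mul_apply q N j
  rw [hq.2, one_pow] at h0 h1
  rw [Finset.sum_apply]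
  calc ∑ α ∈ Nat.antidiagonalTuple r N, multinomialWeight q α * ((α j : ℝ) / N - q j)
      = (∑ α ∈ Nat.antidiagonalTuple r N, multinomialWeight q α * α j) / N
        - (∑ α ∈ Nat.antidiagonalTuple r N, multinomialWeight q α) * q j := by
        rw [sum_div, sum_mul, ← sum_sub_distrib]
        exact sum_congr rfl fun α _ => by ring
    _ = 0 := by
        rw [h0, h1]
        field_simp
        ring

lemma sum_multinomialWeight_mul_sq_norm_sub_le {N : ℕ} (hN : N ≠ 0) {q : Fin r → ℝ}
    (hq : q ∈ stdSimplex ℝ (Fin r)) :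
    ∑ α ∈ Nat.antidiagonalTuple r N,
      multinomialWeight q α * ‖(fun i => (α i : ℝ) / N) - q‖ ^ 2 ≤ 1 / N := by
  calc _ ≤ ∑ α ∈ Nat.antidiagonalTuple r N,
        multinomialWeight q α * ∑ j, ((α j : ℝ) / N - q j) ^ 2 :=
        sum_le_sum fun α _ => mul_le_mul_of_nonneg_left (sq_norm_le_sum_sq _)
          (multinomialWeight_nonneg hq.1 α)
    _ = ∑ j, N * q j * (1 - q j) / N ^ 2 := by
        simp only [mul_sum]
        rw [sum_comm]
        refine sum_congr rfl fun j _ => ?_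
        have h := sum_multinomialWeight_mul_sub_sq hq.2 N j (N * q j)
        rw [sub_self, zero_pow two_ne_zero, add_zero] at h
        rw [← h, sum_div]
        refine sum_congr rfl fun α _ => ?_
        field_simp
    _ ≤ ∑ j, q j / N := sum_le_sum fun j _ => by
        rw [div_le_div_iff₀ (by positivity) (by positivity)]
        nlinarith [sq_nonneg (q j)]
    _ = 1 / N := by rw [← sum_div, hq.2]

lemma abs_TOp_sub_le (hf : Differentiable ℝ f) (hf' : Differentiable ℝ (fderiv ℝ f))
    (hM : ∀ z ∈ stdSimplex ℝ (Fin r), ‖fderiv ℝ (fderiv ℝ f) z‖ ≤ M) {N : ℕ} (hN : N ≠ 0)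
    {q : Fin r → ℝ} (hq : q ∈ stdSimplex ℝ (Fin r)) :
    |TOp N f q - f q| ≤ M / N := by
  have htaylor := (convex_stdSimplex ℝ (Fin r)).abs_sum_mul_image_sub_le (fun z _ => hf z)
    (fun z _ => hf' z) hM (fun α _ => multinomialWeight_nonneg hq.1 α)
    (by rw [sum_multinomialWeight, hq.2, one_pow])
    (fun α hα => natCast_div_mem_stdSimplex hN (Nat.mem_antidiagonalTuple.1 hα)) hq
  rw [sum_multinomialWeight_smul_sub_eq_zero hN hq, norm_zero, mul_zero, zero_add] at htaylor
  calc |TOp N f q - f q| ≤ M * (1 / N) :=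
        htaylor.trans (mul_le_mul_of_nonneg_left (sum_multinomialWeight_mul_sq_norm_sub_le hN hq)
          ((norm_nonneg (fderiv ℝ (fderiv ℝ f) q)).trans (hM q hq)))
    _ = M / N := by ring

end Sampling

section Transition

variable {r : ℕ} {P : Matrix (Fin r) (Fin r) ℝ}

lemma IsStochastic.sum_multinomialWeight (hP : IsStochastic P) (i : Fin r) (m : ℕ) :
    ∑ x ∈ Nat.antidiagonalTuple r m, multinomialWeight (P i) x = 1 := by
  rw [_root_.sum_multinomialWeight, hP.2, one_pow]

lemma sum_prod_multinomialWeight_eq_one (hP : IsStochastic P) (n : Fin r → ℕ) :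
    ∑ ξ ∈ Fintype.piFinset fun i => Nat.antidiagonalTuple r (n i),
      ∏ i, multinomialWeight (P i) (ξ i) = 1 :=
  sum_piFinset_prod_eq_one fun i => hP.sum_multinomialWeight i (n i)

lemma sum_prod_multinomialWeight_mul_sub_sq (hP : IsStochastic P) (n : Fin r → ℕ) (i j : Fin r)
    (c : ℝ) :
    ∑ ξ ∈ Fintype.piFinset fun i => Nat.antidiagonalTuple r (n i),
      (∏ l, multinomialWeight (P l) (ξ l)) * (ξ i j - c) ^ 2
      = n i * P i j * (1 - P i j) + (n i * P i j - c) ^ 2 := by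
  refine (sum_piFinset_prod_mul_apply (fun l => hP.sum_multinomialWeight l (n l)) i
    fun x : Fin r → ℕ => ((x j : ℝ) - c) ^ 2).trans ?_
  exact sum_multinomialWeight_mul_sub_sq (hP.2 i) (n i) j c

lemma sum_prod_multinomialWeight_mul_sum_sub (hP : IsStochastic P) (n : Fin r → ℕ) (j : Fin r)
    (c : Fin r → ℝ) :
    ∑ ξ ∈ Fintype.piFinset fun i => Nat.antidiagonalTuple r (n i),
      (∏ l, multinomialWeight (P l) (ξ l)) * ∑ i, ((ξ i j : ℝ) - c i)
      = ∑ i, (n i * P i j - c i) := by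
  simp only [mul_sum]
  rw [sum_comm]
  refine sum_congr rfl fun i _ => ?_
  rw [sum_piFinset_prod_mul_apply (fun l => hP.sum_multinomialWeight l (n l)) i
    fun x => (x j : ℝ) - c i]
  simp only [mul_sub, sum_sub_distrib, ← sum_mul, hP.sum_multinomialWeight, one_mul]
  rw [sum_multinomialWeight_mul_apply, hP.2, one_pow, mul_one]

/-- Cauchy–Schwarz over the `r` rows replaces the independence of the rows here. -/
lemma sum_prod_multinomialWeight_mul_sum_sub_sq_le (hP : IsStochastic P) (n : Fin r → ℕ)
    (j : Fin r) (c : Fin r → ℝ) :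
    ∑ ξ ∈ Fintype.piFinset fun i => Nat.antidiagonalTuple r (n i),
      (∏ l, multinomialWeight (P l) (ξ l)) * (∑ i, ((ξ i j : ℝ) - c i)) ^ 2
      ≤ r * ∑ i, (n i * P i j * (1 - P i j) + (n i * P i j - c i) ^ 2) := by
  calc _ ≤ ∑ ξ ∈ Fintype.piFinset fun i => Nat.antidiagonalTuple r (n i),
        (∏ l, multinomialWeight (P l) (ξ l)) * (r * ∑ i, ((ξ i j : ℝ) - c i) ^ 2) := by
        refine sum_le_sum fun ξ _ => mul_le_mul_of_nonneg_left ?_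
          (prod_nonneg fun l _ => multinomialWeight_nonneg (hP.1 l) _)
        simpa using sq_sum_le_card_mul_sum_sq (s := univ) (f := fun i => (ξ i j : ℝ) - c i)
    _ = ∑ i, r * ∑ ξ ∈ Fintype.piFinset fun i => Nat.antidiagonalTuple r (n i),
        (∏ l, multinomialWeight (P l) (ξ l)) * ((ξ i j : ℝ) - c i) ^ 2 := by
        simp only [mul_sum, mul_left_comm _ (r : ℝ)]
        exact sum_comm
    _ = r * ∑ i, (n i * P i j * (1 - P i j) + (n i * P i j - c i) ^ 2) := by
        rw [← mul_sum]
        exact congrArg _ (sum_congr rfl fun i _ =>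
          sum_prod_multinomialWeight_mul_sub_sq hP n i j (c i))

end Transition

section Perturbation

variable {r N : ℕ} {B : Matrix (Fin r) (Fin r) ℝ} {C : ℝ} {n : Fin r → ℕ}

lemma natCast_mul_one_add_smul_sub (i j : Fin r) :
    (n i : ℝ) * (1 + (N : ℝ)⁻¹ • B) i j - (if i = j then (n i : ℝ) else 0) = n i * B i j / N := by
  rcases eq_or_ne i j with rfl | hij
  · simp
    ring
  · simp [hij]
    ring

lemma sum_sub_ite_eq (x : Fin r → ℝ) (j : Fin r) :
    ∑ i, (x i - if i = j then (n i : ℝ) else 0) = ∑ i, x i - n j := by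
  rw [sum_sub_distrib, sum_ite_eq']
  simp

lemma abs_natCast_mul_div_le (hn : ∑ i, n i = N) (hB : ∀ i j, |B i j| ≤ C) (i j : Fin r) :
    |(n i : ℝ) * B i j / N| ≤ C := by
  have hni : (n i : ℝ) ≤ N := by
    rw [← hn]; exact_mod_cast single_le_sum (fun l _ => Nat.zero_le (n l)) (mem_univ i)
  have hC : 0 ≤ C := (abs_nonneg _).trans (hB i j)
  rw [abs_div, abs_mul, Nat.abs_cast, Nat.abs_cast]
  exact div_le_of_le_mul₀ (Nat.cast_nonneg N) hC
    (mul_le_mul hni (hB i j) (abs_nonneg _) (Nat.cast_nonneg N) |>.trans_eq (mul_comm _ _))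

lemma abs_sum_natCast_mul_div_le (hN : N ≠ 0) (hn : ∑ i, n i = N) (hB : ∀ i j, |B i j| ≤ C)
    (j : Fin r) :
    |∑ i, (n i : ℝ) * B i j / N| ≤ C := by
  rw [← sum_div, abs_div, Nat.abs_cast, div_le_iff₀ (by positivity)]
  calc |∑ i, (n i : ℝ) * B i j| ≤ ∑ i, (n i : ℝ) * C := by
        refine (abs_sum_le_sum_abs _ _).trans (sum_le_sum fun i _ => ?_)
        rw [abs_mul, Nat.abs_cast]
        exact mul_le_mul_of_nonneg_left (hB i j) (Nat.cast_nonneg _)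
    _ = C * N := by rw [← sum_mul, ← Nat.cast_sum, hn, mul_comm]

lemma natCast_div_sub_natCast_div (ξ : Fin r → Fin r → ℕ) (j : Fin r) :
    ((∑ i, ξ i j : ℕ) : ℝ) / N - (n j : ℝ) / N
      = (N : ℝ)⁻¹ * ∑ i, ((ξ i j : ℝ) - if i = j then (n i : ℝ) else 0) := by
  rw [sum_sub_ite_eq, Nat.cast_sum]
  ring

lemma norm_sum_prod_multinomialWeight_smul_sub_le (hN : N ≠ 0)
    (hP : IsStochastic (1 + (N : ℝ)⁻¹ • B)) (hB : ∀ i j, |B i j| ≤ C) (hn : ∑ i, n i = N) :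
    ‖∑ ξ ∈ Fintype.piFinset fun i => Nat.antidiagonalTuple r (n i),
      (∏ l, multinomialWeight ((1 + (N : ℝ)⁻¹ • B) l) (ξ l)) •
        ((fun j => ((∑ i, ξ i j : ℕ) : ℝ) / N) - fun j => (n j : ℝ) / N)‖ ≤ C / N := by
  have : Nonempty (Fin r) := by
    refine Fin.pos_iff_nonempty.1 (Nat.pos_of_ne_zero fun hr => hN ?_)
    subst hr
    simpa using hn.symm
  refine (pi_norm_le_iff_of_nonempty _).2 fun j => ?_
  simp only [Real.norm_eq_abs, Finset.sum_apply, Pi.smul_apply, Pi.sub_apply, smul_eq_mul,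
    natCast_div_sub_natCast_div, mul_left_comm _ (N : ℝ)⁻¹, ← mul_sum]
  rw [sum_prod_multinomialWeight_mul_sum_sub hP, abs_mul, abs_inv, Nat.abs_cast, div_eq_inv_mul]
  simp only [natCast_mul_one_add_smul_sub]
  exact mul_le_mul_of_nonneg_left (abs_sum_natCast_mul_div_le hN hn hB j) (by positivity)

lemma sum_prod_multinomialWeight_mul_sq_norm_sub_le (hN : N ≠ 0)
    (hP : IsStochastic (1 + (N : ℝ)⁻¹ • B)) (hB : ∀ i j, |B i j| ≤ C) (hn : ∑ i, n i = N) :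
    ∑ ξ ∈ Fintype.piFinset fun i => Nat.antidiagonalTuple r (n i),
      (∏ l, multinomialWeight ((1 + (N : ℝ)⁻¹ • B) l) (ξ l)) *
        ‖(fun j => ((∑ i, ξ i j : ℕ) : ℝ) / N) - fun j => (n j : ℝ) / N‖ ^ 2
      ≤ r * (N + r ^ 2 * C ^ 2) / N ^ 2 := by
  set P := 1 + (N : ℝ)⁻¹ • B
  calc _ ≤ ∑ j, ∑ ξ ∈ Fintype.piFinset fun i => Nat.antidiagonalTuple r (n i),
        (∏ l, multinomialWeight (P l) (ξ l)) *
          ((N : ℝ)⁻¹ * ∑ i, ((ξ i j : ℝ) - if i = j then (n i : ℝ) else 0)) ^ 2 := by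
        rw [sum_comm]
        refine sum_le_sum fun ξ _ => ?_
        rw [← mul_sum]
        refine mul_le_mul_of_nonneg_left ((sq_norm_le_sum_sq _).trans_eq ?_)
          (prod_nonneg fun l _ => multinomialWeight_nonneg (hP.1 l) (ξ l))
        simp only [Pi.sub_apply, natCast_div_sub_natCast_div]
    _ ≤ ∑ j, (N : ℝ)⁻¹ ^ 2 * (r * ∑ i, ((n i : ℝ) * P i j + C ^ 2)) := by
        refine sum_le_sum fun j _ => ?_
        simp only [mul_pow, mul_left_comm _ ((N : ℝ)⁻¹ ^ 2), ← mul_sum]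
        refine mul_le_mul_of_nonneg_left ?_ (by positivity)
        refine (sum_prod_multinomialWeight_mul_sum_sub_sq_le hP n j _).trans ?_
        refine mul_le_mul_of_nonneg_left (sum_le_sum fun i _ => add_le_add ?_ ?_) (by positivity)
        · nlinarith [hP.1 i j, mul_nonneg (Nat.cast_nonneg (n i) : (0 : ℝ) ≤ n i)
            (mul_self_nonneg (P i j))]
        · rw [natCast_mul_one_add_smul_sub, ← sq_abs]
          exact pow_le_pow_left₀ (abs_nonneg _) (abs_natCast_mul_div_le hn hB i j) 2
    _ = r * (N + r ^ 2 * C ^ 2) / N ^ 2 := by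
        rw [← mul_sum, ← mul_sum, sum_comm]
        simp only [sum_add_distrib, ← mul_sum, hP.2, sum_const, card_univ, Fintype.card_fin,
          nsmul_eq_mul, mul_one]
        rw [← Nat.cast_sum, hn]
        ring

end Perturbation

section OneStep

variable {r N : ℕ} {n : Fin r → ℕ}

lemma colSum_div_mem_stdSimplex (hN : N ≠ 0) (hn : ∑ i, n i = N) {ξ : Fin r → Fin r → ℕ}
    (hξ : ξ ∈ Fintype.piFinset fun i => Nat.antidiagonalTuple r (n i)) :
    (fun j => ((∑ i, ξ i j : ℕ) : ℝ) / N) ∈ stdSimplex ℝ (Fin r) := by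
  refine natCast_div_mem_stdSimplex hN ?_
  rw [sum_comm, ← hn]
  exact sum_congr rfl fun i _ => Nat.mem_antidiagonalTuple.1 (Fintype.mem_piFinset.1 hξ i)

lemma abs_SOp_le (hN : N ≠ 0) {P : Matrix (Fin r) (Fin r) ℝ} (hP : IsStochastic P)
    {g : (Fin r → ℝ) → ℝ} {ε : ℝ} (hg : ∀ z ∈ stdSimplex ℝ (Fin r), |g z| ≤ ε)
    (hn : ∑ i, n i = N) :
    |SOp N P g n| ≤ ε := by
  refine (abs_sum_le_sum_abs _ _).trans ?_
  calc _ ≤ ∑ ξ ∈ Fintype.piFinset fun i => Nat.antidiagonalTuple r (n i),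
        (∏ i, multinomialWeight (P i) (ξ i)) * ε := by
        refine sum_le_sum fun ξ hξ => ?_
        have hW := prod_nonneg fun i (_ : i ∈ univ) => multinomialWeight_nonneg (hP.1 i) (ξ i)
        rw [abs_mul, abs_of_nonneg hW]
        exact mul_le_mul_of_nonneg_left (hg _ (colSum_div_mem_stdSimplex hN hn hξ)) hW
    _ = ε := by rw [← sum_mul, sum_prod_multinomialWeight_eq_one hP, one_mul]

lemma natCast_mul_abs_SOp_sub_le {f : (Fin r → ℝ) → ℝ} (hf : Differentiable ℝ f)
    (hf' : Differentiable ℝ (fderiv ℝ f)) {M₁ M₂ : ℝ}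
    (hM₁ : ∀ z ∈ stdSimplex ℝ (Fin r), ‖fderiv ℝ f z‖ ≤ M₁)
    (hM₂ : ∀ z ∈ stdSimplex ℝ (Fin r), ‖fderiv ℝ (fderiv ℝ f) z‖ ≤ M₂) (hN : N ≠ 0)
    {B : Matrix (Fin r) (Fin r) ℝ} (hP : IsStochastic (1 + (N : ℝ)⁻¹ • B)) {C : ℝ}
    (hB : ∀ i j, |B i j| ≤ C) (hn : ∑ i, n i = N) :
    N * |SOp N (1 + (N : ℝ)⁻¹ • B) f n - f (fun i => (n i : ℝ) / N)|
      ≤ M₁ * C + M₂ * (r * (1 + r ^ 2 * C ^ 2)) := by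
  have hp : (fun i => (n i : ℝ) / N) ∈ stdSimplex ℝ (Fin r) := natCast_div_mem_stdSimplex hN hn
  have hM₁0 : 0 ≤ M₁ := (norm_nonneg (fderiv ℝ f _)).trans (hM₁ _ hp)
  have hM₂0 : 0 ≤ M₂ := (norm_nonneg (fderiv ℝ (fderiv ℝ f) _)).trans (hM₂ _ hp)
  have htaylor := (convex_stdSimplex ℝ (Fin r)).abs_sum_mul_image_sub_le (fun z _ => hf z)
    (fun z _ => hf' z) hM₂ (fun ξ _ => prod_nonneg fun l _ => multinomialWeight_nonneg (hP.1 l) _)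
    (sum_prod_multinomialWeight_eq_one hP n) (fun ξ hξ => colSum_div_mem_stdSimplex hN hn hξ) hp
  calc _ ≤ N * (M₁ * (C / N) + M₂ * (r * (N + r ^ 2 * C ^ 2) / N ^ 2)) := by
        refine mul_le_mul_of_nonneg_left (htaylor.trans (add_le_add ?_ ?_)) (Nat.cast_nonneg N)
        · exact mul_le_mul (hM₁ _ hp) (norm_sum_prod_multinomialWeight_smul_sub_le hN hP hB hn)
            (norm_nonneg _) hM₁0
        · exact mul_le_mul_of_nonneg_left
            (sum_prod_multinomialWeight_mul_sq_norm_sub_le hN hP hB hn) hM₂0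
    _ = M₁ * C + M₂ * (r * (1 + r ^ 2 * C ^ 2 / N)) := by field_simp
    _ ≤ M₁ * C + M₂ * (r * (1 + r ^ 2 * C ^ 2)) := by
        gcongr
        exact div_le_self (by positivity) (by exact_mod_cast Nat.one_le_iff_ne_zero.2 hN)

lemma natCast_mul_abs_UOp_sub_le {f : (Fin r → ℝ) → ℝ} (hf : Differentiable ℝ f)
    (hf' : Differentiable ℝ (fderiv ℝ f)) {M₁ M₂ : ℝ}
    (hM₁ : ∀ z ∈ stdSimplex ℝ (Fin r), ‖fderiv ℝ f z‖ ≤ M₁)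
    (hM₂ : ∀ z ∈ stdSimplex ℝ (Fin r), ‖fderiv ℝ (fderiv ℝ f) z‖ ≤ M₂) (hN : N ≠ 0)
    {B : Matrix (Fin r) (Fin r) ℝ} (hP : IsStochastic (1 + (N : ℝ)⁻¹ • B)) {C : ℝ}
    (hB : ∀ i j, |B i j| ≤ C) (hn : ∑ i, n i = N) :
    N * |UOp N (1 + (N : ℝ)⁻¹ • B) f n - f (fun i => (n i : ℝ) / N)|
      ≤ M₂ + (M₁ * C + M₂ * (r * (1 + r ^ 2 * C ^ 2))) := by
  set P := 1 + (N : ℝ)⁻¹ • B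
  have hN' : (0 : ℝ) < N := by positivity
  have hsplit : UOp N P f n - f (fun i => (n i : ℝ) / N)
      = SOp N P (fun z => TOp N f z - f z) n + (SOp N P f n - f (fun i => (n i : ℝ) / N)) := by
    simp only [UOp, SOp, mul_sub, sum_sub_distrib]
    ring
  have hsampling : N * |SOp N P (fun z => TOp N f z - f z) n| ≤ M₂ := by
    rw [← le_div_iff₀' hN']
    exact abs_SOp_le hN hP (fun z hz => abs_TOp_sub_le hf hf' hM₂ hN hz) hn
  rw [hsplit]
  calc _ ≤ N * |SOp N P (fun z => TOp N f z - f z) n|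
        + N * |SOp N P f n - f (fun i => (n i : ℝ) / N)| := by
        rw [← mul_add]; exact mul_le_mul_of_nonneg_left (abs_add_le _ _) hN'.le
    _ ≤ _ := add_le_add hsampling (natCast_mul_abs_SOp_sub_le hf hf' hM₁ hM₂ hN hP hB hn)

end OneStep

section Paths

open Filter Topology

theorem isBounded_image_Icc_of_cadlag {α : Type*} [PseudoMetricSpace α] {g : ℝ → α} {a b : ℝ}
    (hright : ∀ t, a ≤ t → ContinuousWithinAt g (Set.Ici t) t)
    (hleft : ∀ t, a < t → ∃ L, Tendsto g (𝓝[<] t) (𝓝 L)) :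
    Bornology.IsBounded (g '' Set.Icc a b) := by
  refine isCompact_Icc.induction_on (p := fun s => Bornology.IsBounded (g '' s)) (by simp)
    (fun s t hst ht => ht.subset (Set.image_mono hst))
    (fun s t hs ht => by rw [Set.image_union]; exact hs.union ht) fun x hx => ?_
  obtain ⟨s₁, hs₁, hb₁⟩ := Metric.exists_isBounded_image_of_tendsto (hright x hx.1)
  rcases hx.1.eq_or_lt with rfl | hax
  · exact ⟨s₁, nhdsWithin_mono _ Set.Icc_subset_Ici_self hs₁, hb₁⟩
  · obtain ⟨L, hL⟩ := hleft x hax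
    obtain ⟨s₂, hs₂, hb₂⟩ := Metric.exists_isBounded_image_of_tendsto hL
    refine ⟨s₂ ∪ s₁, mem_nhdsWithin_of_mem_nhds ?_, by rw [Set.image_union]; exact hb₂.union hb₁⟩
    rw [← nhdsLT_sup_nhdsGE]
    exact union_mem_sup hs₂ hs₁

theorem exists_abs_apply_le_of_cadlag {m n : Type*} [Finite m] [Finite n]
    {g : ℝ → Matrix m n ℝ} {a b : ℝ}
    (hright : ∀ t, a ≤ t → ContinuousWithinAt g (Set.Ici t) t)
    (hleft : ∀ t, a < t → ∃ L, Tendsto g (𝓝[<] t) (𝓝 L)) :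
    ∃ M, ∀ s ∈ Set.Icc a b, ∀ i j, |g s i j| ≤ M := by
  have hentry : ∀ i j, ∃ M, ∀ s ∈ Set.Icc a b, |g s i j| ≤ M := fun i j => by
    have hcont : Continuous fun A : Matrix m n ℝ => A i j :=
      Continuous.matrix_elem continuous_id i j
    obtain ⟨M, hM⟩ := isBounded_iff_forall_norm_le.1 (isBounded_image_Icc_of_cadlag (b := b)
      (fun t ht => hcont.continuousAt.comp_continuousWithinAt (hright t ht))
      fun t ht => let ⟨L, hL⟩ := hleft t ht; ⟨L i j, (hcont.tendsto L).comp hL⟩)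
    exact ⟨M, fun s hs => hM _ (Set.mem_image_of_mem _ hs)⟩
  choose M hM using hentry
  obtain ⟨M', hM'⟩ := Finite.exists_le fun ij : m × n => M ij.1 ij.2
  exact ⟨M', fun s hs i j => (hM i j s hs).trans (hM' (i, j))⟩

lemma exp_neg_mul_le_integral_sSup {h : ℝ → ℝ} (h0 : ∀ s, 0 ≤ h s) (h1 : ∀ s, h s ≤ 1) {t : ℝ}
    (ht : 0 ≤ t) :
    Real.exp (-t) * h t ≤ ∫ u in Set.Ioi 0, Real.exp (-u) * sSup (h '' Set.Icc 0 u) := by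
  set g : ℝ → ℝ := fun u => sSup (h '' Set.Icc 0 u)
  have hbdd : ∀ u, BddAbove (h '' Set.Icc 0 u) := fun u => ⟨1, by rintro _ ⟨s, -, rfl⟩; exact h1 s⟩
  have hg0 : ∀ u, 0 ≤ g u := fun u => Real.sSup_nonneg (by rintro _ ⟨s, -, rfl⟩; exact h0 s)
  have hg1 : ∀ u, g u ≤ 1 := fun u => Real.sSup_le (by rintro _ ⟨s, -, rfl⟩; exact h1 s) zero_le_one
  have hmono : Monotone g := by
    intro u v huv
    rcases lt_or_ge u 0 with hu | hu
    · simpa [g, Set.Icc_eq_empty_of_lt hu] using hg0 v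
    · exact csSup_le_csSup (hbdd v) ⟨h 0, 0, ⟨le_rfl, hu⟩, rfl⟩
        (Set.image_mono (Set.Icc_subset_Icc_right huv))
  have hint : IntegrableOn (fun u => Real.exp (-u) * g u) (Set.Ioi 0) := by
    refine (integrableOn_exp_neg_Ioi 0).mono' ?_ (Eventually.of_forall fun u => ?_)
    · exact ((Real.measurable_exp.comp measurable_neg).mul hmono.measurable).aestronglyMeasurable
    · rw [Real.norm_eq_abs, abs_of_nonneg (mul_nonneg (Real.exp_pos _).le (hg0 u))]
      exact mul_le_of_le_one_right (Real.exp_pos _).le (hg1 u)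
  calc Real.exp (-t) * h t = ∫ u in Set.Ioi t, Real.exp (-u) * h t := by
        rw [integral_mul_const, integral_exp_neg_Ioi]
    _ ≤ ∫ u in Set.Ioi t, Real.exp (-u) * g u :=
        setIntegral_mono_on ((integrableOn_exp_neg_Ioi t).mul_const _)
          (hint.mono_set (Set.Ioi_subset_Ioi ht)) measurableSet_Ioi fun u hu =>
          mul_le_mul_of_nonneg_left (le_csSup (hbdd u) ⟨t, ⟨ht, hu.le⟩, rfl⟩)
            (Real.exp_pos _).le
    _ ≤ ∫ u in Set.Ioi 0, Real.exp (-u) * g u :=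
        setIntegral_mono_set hint
          (Eventually.of_forall fun u => mul_nonneg (Real.exp_pos _).le (hg0 u))
          (Eventually.of_forall (Set.Ioi_subset_Ioi ht))

lemma abs_apply_le_frobNorm {r : ℕ} (M : Matrix (Fin r) (Fin r) ℝ) (i j : Fin r) :
    |M i j| ≤ frobNorm M := by
  rw [frobNorm, ← Real.sqrt_sq_eq_abs]
  refine Real.sqrt_le_sqrt ((single_le_sum (fun j _ => sq_nonneg (M i j)) (mem_univ j)).trans ?_)
  exact single_le_sum (f := fun i => ∑ j, M i j ^ 2)
    (fun i _ => sum_nonneg fun j _ => sq_nonneg (M i j)) (mem_univ i)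

lemma eventually_abs_apply_le_of_tendsto_dU {r : ℕ} {A : ℕ → ℝ → Matrix (Fin r) (Fin r) ℝ}
    {Alim : ℝ → Matrix (Fin r) (Fin r) ℝ} (hconv : Tendsto (fun N => dU (A N) Alim) atTop (𝓝 0))
    {T M : ℝ} (hM : ∀ s ∈ Set.Icc 0 T, ∀ i j, |Alim s i j| ≤ M) :
    ∀ᶠ N in atTop, ∀ s ∈ Set.Icc 0 T, ∀ i j, |A N s i j| ≤ M + 1 := by
  filter_upwards [hconv.eventually (gt_mem_nhds (Real.exp_pos (-T)))] with N hN s hs i j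
  set d := frobNorm (A N s - Alim s)
  have hd : d < 1 := by
    by_contra! hd
    have hdU := exp_neg_mul_le_integral_sSup (h := fun s => min (frobNorm (A N s - Alim s)) 1)
      (fun s => le_min (Real.sqrt_nonneg _) zero_le_one) (fun s => min_le_right _ _) hs.1
    rw [min_eq_right hd, mul_one] at hdU
    exact (hdU.trans_lt hN).not_ge (Real.exp_le_exp.2 (neg_le_neg hs.2))
  have hdiff := abs_apply_le_frobNorm (A N s - Alim s) i j
  rw [Matrix.sub_apply] at hdiff
  linarith [abs_sub_abs_le_abs_sub (A N s i j) (Alim s i j), hM s hs i j]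

lemma exists_forall_apply_floor_div_le {ι : Type*} [Finite ι] {F : ℕ → ℝ → ι → ℝ} {T C : ℝ}
    (h : ∀ᶠ N in atTop, ∀ s ∈ Set.Icc 0 T, ∀ i, F N s i ≤ C) :
    ∃ C', ∀ N : ℕ, ∀ t ∈ Set.Icc 0 T, ∀ i, F N (⌊N * t⌋₊ / N) i ≤ C' := by
  obtain ⟨N₀, hN₀⟩ := eventually_atTop.1 h
  -- below `N₀` only the finitely many grid points `k / N` with `k ≤ ⌊N₀ T⌋` occur
  obtain ⟨C₀, hC₀⟩ := Finite.exists_le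
    fun x : Fin N₀ × Fin (⌊N₀ * T⌋₊ + 1) × ι => F x.1 (x.2.1 / x.1) x.2.2
  refine ⟨max C C₀, fun N t ht i => ?_⟩
  rcases le_or_gt N₀ N with hN | hN
  · refine (hN₀ N hN _ ⟨by positivity, ?_⟩ i).trans (le_max_left _ _)
    exact (div_le_of_le_mul₀ (Nat.cast_nonneg _) ht.1
      ((Nat.floor_le (by nlinarith [ht.1])).trans_eq (mul_comm _ _))).trans ht.2
  · have hk : ⌊N * t⌋₊ < ⌊N₀ * T⌋₊ + 1 := Nat.lt_succ_of_le (Nat.floor_le_floor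
      (mul_le_mul (by exact_mod_cast hN.le) ht.2 ht.1 (Nat.cast_nonneg _)))
    exact (hC₀ (⟨N, hN⟩, ⟨_, hk⟩, i)).trans (le_max_right _ _)

end Paths

theorem combined_generator_boundedness_general
    (r : ℕ)
    (A : ℕ → ℝ → Matrix (Fin r) (Fin r) ℝ)
    (Alim : ℝ → Matrix (Fin r) (Fin r) ℝ)
    (hcadlag_right : ∀ t : ℝ, 0 ≤ t → ContinuousWithinAt Alim (Set.Ici t) t)
    (hcadlag_left : ∀ t : ℝ, 0 < t →
      ∃ L, Filter.Tendsto Alim (nhdsWithin t (Set.Iio t)) (nhds L))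
    (hstoch : ∀ N : ℕ, 1 ≤ N → ∀ k : ℕ,
      IsStochastic (1 + ((N : ℝ))⁻¹ • A N ((k : ℝ) / N)))
    (hconv : Filter.Tendsto (fun N => dU (A N) Alim) Filter.atTop (nhds 0))
    (f : (Fin r → ℝ) → ℝ) (hf : ContDiff ℝ 3 f) (T : ℝ) :
    ∃ C : ℝ, ∀ N : ℕ, 1 ≤ N → ∀ t : ℝ, 0 ≤ t → t ≤ T →
      ∀ n : Fin r → ℕ, ∑ i, n i = N →
        |(N : ℝ) * (UOp N (1 + ((N : ℝ))⁻¹ • A N ((⌊(N : ℝ) * t⌋₊ : ℝ) / N)) f n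
              - f fun i => (n i : ℝ) / N)| ≤ C := by
  have hf' : ContDiff ℝ 2 (fderiv ℝ f) := hf.fderiv_right (by norm_num)
  obtain ⟨M₁, hM₁⟩ := (isCompact_stdSimplex ℝ (Fin r)).exists_bound_of_continuousOn
    hf'.continuous.continuousOn
  obtain ⟨M₂, hM₂⟩ := (isCompact_stdSimplex ℝ (Fin r)).exists_bound_of_continuousOn
    (hf'.fderiv_right (m := 1) (by norm_num)).continuous.continuousOn
  obtain ⟨M, hM⟩ := exists_abs_apply_le_of_cadlag (b := T) hcadlag_right hcadlag_left
  obtain ⟨C, hC⟩ := exists_forall_apply_floor_div_le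
    (F := fun N s (ij : Fin r × Fin r) => |A N s ij.1 ij.2|)
    ((eventually_abs_apply_le_of_tendsto_dU hconv hM).mono fun N h s hs ij => h s hs ij.1 ij.2)
  refine ⟨M₂ + (M₁ * C + M₂ * (r * (1 + r ^ 2 * C ^ 2))), fun N hN t ht htT n hn => ?_⟩
  rw [abs_mul, Nat.abs_cast]
  exact natCast_mul_abs_UOp_sub_le (hf.differentiable (by norm_num))
    (hf'.differentiable (by norm_num)) hM₁ hM₂ (by omega) (hstoch N hN _)
    (fun i j => hC N t ⟨ht, htT⟩ (i, j)) hn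

/-- Uniform boundedness of the combined one-step generators: for every C³ function `f`
and `T > 0`,
`sup_(N≥1) sup_(0≤t≤T) sup_(p ∈ K_N) |N(U_(N,[Nt])f(p) − f(p))| < ∞`. -/
theorem combined_generator_boundedness
    (r : ℕ) (hr : 2 ≤ r)
    (A : ℕ → ℝ → Matrix (Fin r) (Fin r) ℝ)
    (Alim : ℝ → Matrix (Fin r) (Fin r) ℝ)
    (hQ : ∀ N : ℕ, 1 ≤ N → ∀ t : ℝ, 0 ≤ t → IsQMatrix (A N t))
    (hstepwise : ∀ N : ℕ, 1 ≤ N → ∀ k : ℕ, ∀ t : ℝ,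
      (k : ℝ) / N ≤ t → t < ((k : ℝ) + 1) / N → A N t = A N ((k : ℝ) / N))
    (hQlim : ∀ t : ℝ, 0 ≤ t → IsQMatrix (Alim t))
    (hcadlag_right : ∀ t : ℝ, 0 ≤ t → ContinuousWithinAt Alim (Set.Ici t) t)
    (hcadlag_left : ∀ t : ℝ, 0 < t →
      ∃ L, Filter.Tendsto Alim (nhdsWithin t (Set.Iio t)) (nhds L))
    (hstoch : ∀ N : ℕ, 1 ≤ N → ∀ k : ℕ,
      IsStochastic (1 + ((N : ℝ))⁻¹ • A N ((k : ℝ) / N)))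
    (hconv : Filter.Tendsto (fun N => dU (A N) Alim) Filter.atTop (nhds 0))
    (f : (Fin r → ℝ) → ℝ) (hf : ContDiff ℝ 3 f) (T : ℝ) (hT : 0 < T) :
    ∃ C : ℝ, ∀ N : ℕ, 1 ≤ N → ∀ t : ℝ, 0 ≤ t → t ≤ T →
      ∀ n : Fin r → ℕ, ∑ i, n i = N →
        |(N : ℝ) * (UOp N (1 + ((N : ℝ))⁻¹ • A N ((⌊(N : ℝ) * t⌋₊ : ℝ) / N)) f n
              - f fun i => (n i : ℝ) / N)| ≤ C :=
  combined_generator_boundedness_general r A Alim hcadlag_right hcadlag_left hstoch hconv f hf T
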